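/- arXiv:1701.01461 — 9 statements merged into one kernel-verified Lean document; each statement's English description precedes it below -/
import Mathlib

section
/- Let H be a hypergraph with a β-elimination order < on its vertices, and let <_H be the induced lexicographic order on edges (e <_H f iff max(e Δ f) ∈ f, where Δ is symmetric difference and max is with respect to <). If e, f ∈ H share a vertex x and e <_H f, then e ∩ {y : y ≥ x} ⊆ f. -/
variable {V : Type*} [LinearOrder V]

/-- The colexicographic order on edges: `e <_H f` iff `max (e Δ f) ∈ f`. -/
def edgeLT (e f : Finset V) : Prop :=
  ∃ hne : (symmDiff e f).Nonempty, (symmDiff e f).max' hne ∈ f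

def edgeLE (e f : Finset V) : Prop := e = f ∨ edgeLT e f

/-- The linear order on `V` is a β-elimination order for the hypergraph `H`. -/
def IsBetaElim (H : Finset (Finset V)) : Prop :=
  ∀ x : V, ∀ e ∈ H, ∀ f ∈ H, x ∈ e → x ∈ f →
    (e.filter fun y => x < y) ⊆ f ∨ (f.filter fun y => x < y) ⊆ e

/-- A walk starting at edge `e` and continuing through the vertex/edge pairs in `p`. -/
def WalkAux (H : Finset (Finset V)) : Finset V → List (V × Finset V) → Prop
  | _, [] => True
  | e, (x, f) :: p => x ∈ e ∧ x ∈ f ∧ f ∈ H ∧ WalkAux H f p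

def lastEdge (e : Finset V) (p : List (V × Finset V)) : Finset V :=
  (p.map Prod.snd).getLastD e

/-- `p` is a walk from edge `e` to edge `f` in `H`. -/
def IsWalk (H : Finset (Finset V)) (e f : Finset V) (p : List (V × Finset V)) : Prop :=
  e ∈ H ∧ WalkAux H e p ∧ lastEdge e p = f

/-- A path: a walk with pairwise distinct edges and pairwise distinct vertices. -/
def IsPath (H : Finset (Finset V)) (e f : Finset V) (p : List (V × Finset V)) : Prop :=
  IsWalk H e f p ∧ (e :: p.map Prod.snd).Nodup ∧ (p.map Prod.fst).Nodup

/-- `f ∈ H_e^x`: there is a walk from `f` to `e` using only edges `≤_H e` and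
vertices `≤ x`. -/
def memHex (H : Finset (Finset V)) (e : Finset V) (x : V) (f : Finset V) : Prop :=
  ∃ p, IsWalk H f e p ∧ edgeLE f e ∧ ∀ q ∈ p, edgeLE q.2 e ∧ q.1 ≤ x

theorem edgeLT.exists_mem_sdiff_le {e f : Finset V} (hef : edgeLT e f) {y : V}
    (hye : y ∈ e) (hyf : y ∉ f) : ∃ m ∈ f, m ∉ e ∧ y ≤ m := by
  obtain ⟨hne, hmf⟩ := hef
  have hme : (symmDiff e f).max' hne ∉ e := fun hme =>
    (Finset.mem_symmDiff.mp (Finset.max'_mem _ hne)).elim (fun h => h.2 hmf) (fun h => h.2 hme)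
  exact ⟨_, hmf, hme, Finset.le_max' _ y (Finset.mem_symmDiff.mpr (Or.inl ⟨hye, hyf⟩))⟩

theorem edgeLT.filter_lt_subset_of_filter_lt_subset {e f : Finset V} (hef : edgeLT e f) {x : V}
    (hfe : (f.filter fun y => x < y) ⊆ e) : (e.filter fun y => x < y) ⊆ f := by
  intro y hy
  rw [Finset.mem_filter] at hy
  by_contra hyf
  obtain ⟨m, hmf, hme, hym⟩ := hef.exists_mem_sdiff_le hy.1 hyf
  exact hme (hfe (Finset.mem_filter.mpr ⟨hmf, hy.2.trans_le hym⟩))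

theorem ordervar {V : Type*} [LinearOrder V] (H : Finset (Finset V))
    (hβ : IsBetaElim H) (e f : Finset V) (he : e ∈ H) (hf : f ∈ H)
    (x : V) (hxe : x ∈ e) (hxf : x ∈ f) (hef : edgeLT e f) :
    (e.filter fun y => x ≤ y) ⊆ f := by
  intro y hy
  rw [Finset.mem_filter] at hy
  obtain rfl | hxy := hy.2.eq_or_lt
  · exact hxf
  have hsub : (e.filter fun y => x < y) ⊆ f :=
    (hβ x e he f hf hxe hxf).elim id hef.filter_lt_subset_of_filter_lt_subset
  exact hsub (Finset.mem_filter.mpr ⟨hy.1, hxy⟩)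
end

section
/- Let H be a hypergraph with β-elimination order < and induced edge order <_H. If P = (e_0, x_0, e_1, x_1, ..., e_n) is a decreasing path (i.e., e_i >_H e_{i+1} and x_i > x_{i+1} for all i), then e_n ∩ {y : y ≥ x_0} ⊆ e_0. -/
variable {V : Type*} [LinearOrder V]

/-! If `f <_H e` share a vertex `x`, the β-condition at `x` gives `e_{>x} ⊆ f` or `f_{>x} ⊆ e`,
and the first forces the second: otherwise `max (e Δ f)` would lie in `e \ f` above `x`, hence in `f`.
So `f ∩ [x, ∞) ⊆ e` for consecutive edges of a decreasing path, and these inclusions compose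
along the path because the thresholds `x_i` decrease. -/

open Finset

lemma filter_lt_subset_of_edgeLT {e f : Finset V} {x : V} (hfe : edgeLT f e)
    (hef : e.filter (x < ·) ⊆ f) : f.filter (x < ·) ⊆ e := by
  intro y hy
  rw [mem_filter] at hy
  by_contra hye
  obtain ⟨hne, hmax⟩ := hfe
  have hym : y ≤ (symmDiff f e).max' hne :=
    le_max' _ _ (mem_symmDiff.mpr (Or.inl ⟨hy.1, hye⟩))
  have hmf : (symmDiff f e).max' hne ∉ f :=
    (mem_symmDiff.mp (max'_mem _ hne)).elim (fun h => absurd hmax h.2) (·.2)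
  exact hmf (hef (mem_filter.mpr ⟨hmax, hy.2.trans_le hym⟩))

lemma IsBetaElim.filter_le_subset {H : Finset (Finset V)} (hβ : IsBetaElim H)
    {e f : Finset V} {x : V} (he : e ∈ H) (hf : f ∈ H) (hxe : x ∈ e) (hxf : x ∈ f)
    (hfe : edgeLT f e) : f.filter (x ≤ ·) ⊆ e := by
  intro y hy
  rw [mem_filter] at hy
  rcases hy.2.eq_or_lt with rfl | hxy
  · exact hxe
  have hy' : y ∈ f.filter (x < ·) := mem_filter.mpr ⟨hy.1, hxy⟩
  rcases hβ x e he f hf hxe hxf with hef | hfe'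
  · exact filter_lt_subset_of_edgeLT hfe hef hy'
  · exact hfe' hy'

lemma lastEdge_cons {α : Type*} (e f : Finset α) (x : α) (p : List (α × Finset α)) :
    lastEdge e ((x, f) :: p) = lastEdge f p := by
  simp only [lastEdge, List.map_cons, List.getLastD_cons]

lemma IsBetaElim.filter_le_lastEdge_subset {H : Finset (Finset V)} (hβ : IsBetaElim H)
    {rest : List (V × Finset V)} {e e1 : Finset V} {x0 : V} (he : e ∈ H)
    (hw : WalkAux H e ((x0, e1) :: rest))
    (hdecE : (e :: e1 :: rest.map Prod.snd).IsChain fun a b => edgeLT b a)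
    (hdecV : (x0 :: rest.map Prod.fst).IsChain fun a b => b < a) :
    (lastEdge e ((x0, e1) :: rest)).filter (x0 ≤ ·) ⊆ e := by
  obtain ⟨hx0e, hx0e1, he1, hw1⟩ := hw
  rw [lastEdge_cons]
  refine Subset.trans ?_ (hβ.filter_le_subset he he1 hx0e hx0e1 (List.isChain_cons_cons.mp hdecE).1)
  match rest, hw1, hdecE, hdecV with
  | [], _, _, _ => rfl
  | (x1, e2) :: rest, hw1, hdecE, hdecV =>
    obtain ⟨hx1, hdecV'⟩ := List.isChain_cons_cons.mp hdecV
    have hsub := hβ.filter_le_lastEdge_subset he1 hw1 (List.isChain_cons_cons.mp hdecE).2 hdecV'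
    intro y hy
    rw [mem_filter] at hy ⊢
    exact ⟨hsub (mem_filter.mpr ⟨hy.1, hx1.le.trans hy.2⟩), hy.2⟩

theorem decreasing_path_inclusion {V : Type*} [LinearOrder V] (H : Finset (Finset V))
    (hβ : IsBetaElim H) (e f : Finset V) (x0 : V) (e1 : Finset V)
    (rest : List (V × Finset V))
    (hpath : IsPath H e f ((x0, e1) :: rest))
    (hdecE : List.Chain' (fun a b => edgeLT b a) (e :: ((x0, e1) :: rest).map Prod.snd))
    (hdecV : List.Chain' (fun a b => b < a) (((x0, e1) :: rest).map Prod.fst)) :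
    (f.filter fun y => x0 ≤ y) ⊆ e := by
  obtain ⟨⟨he, hw, rfl⟩, -, -⟩ := hpath
  exact hβ.filter_le_lastEdge_subset he hw hdecE hdecV
end

section
/- Let H be a β-acyclic hypergraph with β-elimination order <, edge order <_H, and for x ∈ V(H), e ∈ H let H_e^x be the set of edges f ∈ H such that there is a walk from f to e using only edges ≤_H e and vertices ≤ x. Then for every vertex x and edge e, every vertex of H_e^x that is ≥ x belongs to e, i.e., V(H_e^x) ∩ {y : y ≥ x} ⊆ e. -/
variable {V : Type*} [LinearOrder V]

/-!
Take a shortest admissible walk `f = e₀, x₀, e₁, …, eₙ = e` and suppose `y ∈ f \ e` with `x ≤ y`.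
By induction on the length, `e₁` already satisfies the claim, so `y ∉ e₁` and `x₀ < y`; the
β-elimination property at `x₀` then forces `e₁ ∩ (x₀, ∞) ⊆ f`. Minimality forbids shortcuts
`eᵢ ∩ eᵢ₊₂`, and with β-elimination this makes the connecting vertices decrease strictly while
`eᵢ₊₁ ∩ (xᵢ, ∞) ⊆ eᵢ`; hence `e ∩ (x₀, ∞) ⊆ f`. But `f <_H e` puts `max (f Δ e)` in `e \ f`,
above `y > x₀`: a contradiction.
-/

section

variable {H : Finset (Finset V)}

lemma IsBetaElim.upper_subset_or (hβ : IsBetaElim H) {v : V} {g h : Finset V} (hg : g ∈ H)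
    (hh : h ∈ H) (hvg : v ∈ g) (hvh : v ∈ h) :
    (∀ z ∈ g, v < z → z ∈ h) ∨ (∀ z ∈ h, v < z → z ∈ g) := by
  rcases hβ v g hg h hh hvg hvh with hgh | hhg
  · exact Or.inl fun z hz hvz => hgh (Finset.mem_filter.mpr ⟨hz, hvz⟩)
  · exact Or.inr fun z hz hvz => hhg (Finset.mem_filter.mpr ⟨hz, hvz⟩)

lemma upper_subset_of_edgeLE {f e : Finset V} (hfe : edgeLE f e) {v : V}
    (hef : ∀ z ∈ e, v < z → z ∈ f) : ∀ y ∈ f, v < y → y ∈ e := by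
  rcases hfe with rfl | ⟨hne, hmax⟩
  · exact fun y hy _ => hy
  intro y hy hvy
  by_contra hye
  set M := (symmDiff f e).max' hne
  have hMf : M ∉ f := fun hMf => (Finset.mem_symmDiff.mp ((symmDiff f e).max'_mem hne)).elim
    (fun h => h.2 hmax) (fun h => h.2 hMf)
  have hyM : y < M := lt_of_le_of_ne
    ((symmDiff f e).le_max' y (Finset.mem_symmDiff.mpr (Or.inl ⟨hy, hye⟩)))
    (by rintro rfl; exact hMf hy)
  exact hMf (hef M hmax (hvy.trans hyM))

/-- `NoShortcut x g₀ [(x₀, g₁), (x₁, g₂), …]`: no two edges `gᵢ`, `gᵢ₊₂` of the walk share a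
vertex `≤ x`. -/
def NoShortcut (x : V) : Finset V → List (V × Finset V) → Prop
  | g, (_, h) :: (w, k) :: p => (∀ u ∈ g, u ∈ k → x < u) ∧ NoShortcut x h ((w, k) :: p)
  | _, _ => True

/-- Along a shortcut-free walk the connecting vertices strictly decrease, and the part of each
edge above its entry vertex lies in the previous edge. -/
lemma upper_subset_of_noShortcut (hβ : IsBetaElim H) {x : V} :
    ∀ (p : List (V × Finset V)) (gp g : Finset V) (v : V), g ∈ H → WalkAux H g p →
      v ∈ gp → v ∈ g → v ≤ x → (∀ q ∈ p, q.1 ≤ x) → NoShortcut x gp ((v, g) :: p) →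
      (∀ z ∈ g, v < z → z ∈ gp) → ∀ z ∈ lastEdge g p, v < z → z ∈ gp := by
  intro p
  induction p with
  | nil => exact fun _ _ _ _ _ _ _ _ _ _ hggp => hggp
  | cons a q ih =>
    obtain ⟨w, h⟩ := a
    intro gp g v hg ⟨hwg, hwh, hh, hq⟩ hvgp hvg hvx hx ⟨hgph, hns⟩ hggp
    have hwx : w ≤ x := hx (w, h) List.mem_cons_self
    rcases le_or_gt v w with hvw | hwv
    · have hwgp : w ∈ gp := hvw.eq_or_lt.elim (· ▸ hvgp) (hggp w hwg)
      exact absurd (hgph w hwgp hwh) hwx.not_gt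
    rcases hβ.upper_subset_or hg hh hwg hwh with hgh | hhg
    · exact absurd (hgph v hvgp (hgh v hvg hwv)) hvx.not_gt
    intro z hz hvz
    have hzg := ih g h w hh hq hwg hwh hwx (fun q hq => hx q (List.mem_cons_of_mem _ hq)) hns hhg
      z (by simpa only [lastEdge, List.map_cons, List.getLastD_cons] using hz) (hwv.trans hvz)
    exact hggp z hzg hvz

def IsHexWalk (H : Finset (Finset V)) (e : Finset V) (x : V) (g : Finset V)
    (p : List (V × Finset V)) : Prop :=
  WalkAux H g p ∧ lastEdge g p = e ∧ ∀ q ∈ p, edgeLE q.2 e ∧ q.1 ≤ x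

lemma isHexWalk_cons {e g h : Finset V} {x v : V} {p : List (V × Finset V)} :
    IsHexWalk H e x g ((v, h) :: p) ↔
      v ∈ g ∧ v ∈ h ∧ h ∈ H ∧ edgeLE h e ∧ v ≤ x ∧ IsHexWalk H e x h p := by
  simp only [IsHexWalk, WalkAux, lastEdge, List.map_cons, List.getLastD_cons, List.mem_cons,
    forall_eq_or_imp]
  tauto

lemma noShortcut_of_minimal {e : Finset V} {x : V} :
    ∀ (p : List (V × Finset V)) (g : Finset V), IsHexWalk H e x g p →
      (∀ p', IsHexWalk H e x g p' → p.length ≤ p'.length) → NoShortcut x g p := by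
  intro p
  induction p with
  | nil => exact fun _ _ _ => trivial
  | cons a q ih =>
    obtain ⟨v, h⟩ := a
    rcases q with _ | ⟨⟨w, k⟩, q⟩
    · exact fun _ _ _ => trivial
    intro g hp hmin
    obtain ⟨hvg, hvh, hh, hhe, hvx, htail⟩ := isHexWalk_cons.1 hp
    obtain ⟨-, hwk, hk, hke, -, hq⟩ := isHexWalk_cons.1 htail
    refine ⟨fun u hug huk => lt_of_not_ge fun hux => ?_, ih h htail fun p' hp' => ?_⟩
    · have := hmin ((u, k) :: q) (isHexWalk_cons.2 ⟨hug, huk, hk, hke, hux, hq⟩)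
      simp at this
    · have := hmin ((v, h) :: p') (isHexWalk_cons.2 ⟨hvg, hvh, hh, hhe, hvx, hp'⟩)
      simpa using this

theorem IsHexWalk.mem_of_le (hβ : IsBetaElim H) {e f : Finset V} {x : V}
    {p : List (V × Finset V)} (hf : f ∈ H) (hfe : edgeLE f e) (hp : IsHexWalk H e x f p)
    {y : V} (hy : y ∈ f) (hxy : x ≤ y) : y ∈ e := by
  induction hn : p.length using Nat.strong_induction_on generalizing f p y with
  | _ n ih =>
  by_cases hshort : ∃ p', IsHexWalk H e x f p' ∧ p'.length < n
  · obtain ⟨p', hp', hlt⟩ := hshort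
    exact ih _ hlt hf hfe hp' hy hxy rfl
  push Not at hshort
  have hns : NoShortcut x f p := noShortcut_of_minimal p f hp fun p' hp' => hn ▸ hshort p' hp'
  rcases p with _ | ⟨⟨v, g⟩, q⟩
  · exact hp.2.1 ▸ hy
  obtain ⟨hvf, hvg, hg, hge, hvx, hq⟩ := isHexWalk_cons.1 hp
  have hg_sub : ∀ z ∈ g, x ≤ z → z ∈ e := fun z hz hxz =>
    ih q.length (by simp [← hn]) hg hge hq hz hxz rfl
  by_contra hye
  have hvy : v < y := lt_of_le_of_ne (hvx.trans hxy) (by rintro rfl; exact hye (hg_sub v hvg hxy))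
  rcases hβ.upper_subset_or hf hg hvf hvg with hfg | hgf
  · exact hye (hg_sub y (hfg y hy hvy) hxy)
  have hef : ∀ z ∈ e, v < z → z ∈ f := hq.2.1 ▸
    upper_subset_of_noShortcut hβ q f g v hg hq.1 hvf hvg hvx (fun a ha => (hq.2.2 a ha).2) hns hgf
  exact hye (upper_subset_of_edgeLE hfe hef y hy hvy)

end

theorem hex_vars_general {V : Type*} [LinearOrder V] (H : Finset (Finset V))
    (hβ : IsBetaElim H) (e : Finset V) (x : V) :
    ∀ f, memHex H e x f → ∀ y ∈ f, x ≤ y → y ∈ e := by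
  rintro f ⟨p, ⟨hf, hwalk, hlast⟩, hfe, hp⟩ y hy hxy
  exact IsHexWalk.mem_of_le hβ hf hfe ⟨hwalk, hlast, hp⟩ hy hxy

theorem hex_vars {V : Type*} [LinearOrder V] (H : Finset (Finset V))
    (hβ : IsBetaElim H) (e : Finset V) (he : e ∈ H) (x : V) :
    ∀ f, memHex H e x f → ∀ y ∈ f, x ≤ y → y ∈ e :=
  hex_vars_general H hβ e x
end

section
/- Let H be a β-acyclic hypergraph with β-elimination order < and edge order <_H. For every vertex x, edge e, and edge f ∈ H_e^x, there exists a decreasing path from e to f going through vertices ≤ x, i.e., a path (e = e_0, x_0, e_1, ..., x_{n-1}, e_n = f) with e_0 >_H e_1 >_H ... >_H e_n, x_0 > x_1 > ... > x_{n-1}, and each x_i ≤ x. -/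
variable {V : Type*} [LinearOrder V]

/-!
A decreasing path from `e` to `f` is built along a walk from `f` to `e` witnessing `f ∈ H_e^x`,
one step at a time, from the following extension step. Given a decreasing path from `e` to `g`
with last vertex `x'`, and a vertex `y ≤ x` of `g ∩ f` with `f ≤_H e`:
* if `y < x'` and `f <_H g`, append `(y, f)`;
* if `y < x'` and `g <_H f`, β-elimination at `y` puts `x'` in `f`, so drop the last step and
  retry with `x'`;
* if `x' ≤ y`, β-elimination at `x'` puts `y` in the previous edge, so drop the last step and
  retry with `y`.
Each retry shortens the path, so the recursion ends.
-/

open Finset Colex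

section Walks

variable {V : Type*}

theorem lastEdge_cons_s5 (e g : Finset V) (y : V) (p : List (V × Finset V)) :
    lastEdge e ((y, g) :: p) = lastEdge g p := by
  rw [lastEdge, List.map_cons, List.getLastD_cons]
  rfl

theorem lastEdge_append_singleton (e g : Finset V) (y : V) (p : List (V × Finset V)) :
    lastEdge e (p ++ [(y, g)]) = g := by
  simp [lastEdge]

variable {H : Finset (Finset V)}

theorem lastEdge_mem {e : Finset V} {p : List (V × Finset V)} (he : e ∈ H) (hp : WalkAux H e p) :
    lastEdge e p ∈ H := by
  induction p generalizing e with
  | nil => exact he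
  | cons a p ih => exact (lastEdge_cons_s5 e a.2 a.1 p) ▸ ih hp.2.2.1 hp.2.2.2

theorem walkAux_append_singleton {e g : Finset V} {y : V} {p : List (V × Finset V)} :
    WalkAux H e (p ++ [(y, g)]) ↔ WalkAux H e p ∧ y ∈ lastEdge e p ∧ y ∈ g ∧ g ∈ H := by
  induction p generalizing e with
  | nil => simp [WalkAux, lastEdge]
  | cons a p ih =>
    obtain ⟨z, h⟩ := a
    simp only [List.cons_append, WalkAux, ih, lastEdge_cons_s5]
    tauto

end Walks

section EdgeOrder

variable {V : Type*} [LinearOrder V]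

theorem edgeLT_iff_toColex_lt {e f : Finset V} : edgeLT e f ↔ toColex e < toColex f := by
  rw [toColex_lt_toColex_iff_max'_mem, edgeLT]
  exact ⟨fun ⟨hne, h⟩ => ⟨symmDiff_nonempty.1 hne, h⟩, fun ⟨_, h⟩ => ⟨_, h⟩⟩

theorem edgeLT_or_edgeLT_of_ne {e f : Finset V} (h : e ≠ f) : edgeLT e f ∨ edgeLT f e := by
  simp only [edgeLT_iff_toColex_lt]
  exact lt_or_gt_of_ne (toColex_inj.not.2 h)

theorem List.Nodup.of_isChain_edgeLT {l : List (Finset V)}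
    (h : l.IsChain fun a b => edgeLT b a) : l.Nodup :=
  ((List.isChain_map toColex).2 (h.imp fun _ _ => edgeLT_iff_toColex_lt.1)).sortedGT.nodup.of_map _

theorem IsBetaElim.mem_of_edgeLT {H : Finset (Finset V)} (hβ : IsBetaElim H) {e f : Finset V}
    {y z : V} (he : e ∈ H) (hf : f ∈ H) (hye : y ∈ e) (hyf : y ∈ f) (hef : edgeLT e f)
    (hze : z ∈ e) (hyz : y < z) : z ∈ f := by
  obtain ⟨m, hmf, hme, hm⟩ :=
    toColex_lt_toColex_iff_exists_forall_lt.1 (edgeLT_iff_toColex_lt.1 hef)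
  refine (hβ y e he f hf hye hyf).elim (fun h => h (mem_filter.2 ⟨hze, hyz⟩)) fun h => ?_
  by_contra hzf
  exact hme (h (mem_filter.2 ⟨hmf, hyz.trans (hm z hze hzf)⟩))

end EdgeOrder

section DecreasingWalk

variable {V : Type*} [LinearOrder V] {H : Finset (Finset V)} {x : V} {e : Finset V}

def IsDecreasingWalk (H : Finset (Finset V)) (x : V) (e : Finset V) (p : List (V × Finset V)) :
    Prop :=
  WalkAux H e p ∧ (e :: p.map Prod.snd).IsChain (fun a b => edgeLT b a) ∧
    (p.map Prod.fst).IsChain (fun a b => b < a) ∧ ∀ q ∈ p, q.1 ≤ x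

theorem isDecreasingWalk_nil : IsDecreasingWalk H x e [] := by
  simp [IsDecreasingWalk, WalkAux]

theorem isDecreasingWalk_append_singleton {p : List (V × Finset V)} {y : V} {g : Finset V} :
    IsDecreasingWalk H x e (p ++ [(y, g)]) ↔
      IsDecreasingWalk H x e p ∧ y ∈ lastEdge e p ∧ y ∈ g ∧ g ∈ H ∧
        edgeLT g (lastEdge e p) ∧ y ≤ x ∧ ∀ z ∈ (p.map Prod.fst).getLast?, y < z := by
  simp only [IsDecreasingWalk, walkAux_append_singleton, List.map_append, List.map_cons,
    List.map_nil, ← List.cons_append, List.isChain_append, List.getLast?_cons, lastEdge,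
    List.getLastD_eq_getLast?, List.isChain_singleton, List.head?_cons, Option.mem_def,
    Option.some_inj, forall_eq', List.forall_mem_append, List.forall_mem_singleton, true_and]
  tauto

theorem IsDecreasingWalk.isPath {p : List (V × Finset V)} (hp : IsDecreasingWalk H x e p)
    (he : e ∈ H) : IsPath H e (lastEdge e p) p :=
  ⟨⟨he, hp.1, rfl⟩, .of_isChain_edgeLT hp.2.1, hp.2.2.1.sortedGT.nodup⟩

theorem IsDecreasingWalk.exists_of_mem_lastEdge (hβ : IsBetaElim H) (he : e ∈ H)
    {p : List (V × Finset V)} (hp : IsDecreasingWalk H x e p) {f : Finset V} {y : V}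
    (hf : f ∈ H) (hfe : edgeLE f e) (hyp : y ∈ lastEdge e p) (hyf : y ∈ f) (hyx : y ≤ x) :
    ∃ q, IsDecreasingWalk H x e q ∧ lastEdge e q = f := by
  induction p using List.reverseRecOn generalizing y with
  | nil =>
    rcases hfe with rfl | hfe
    · exact ⟨[], hp, rfl⟩
    · exact ⟨[(y, f)], isDecreasingWalk_append_singleton (p := []).2
        ⟨hp, hyp, hyf, hf, hfe, hyx, by simp⟩, rfl⟩
  | append_singleton p a ih =>
    obtain ⟨x', g⟩ := a
    obtain ⟨hp', hx'p, hx'g, hg, hgp, hx'x, -⟩ := isDecreasingWalk_append_singleton.1 hp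
    rw [lastEdge_append_singleton] at hyp
    by_cases hfg : f = g
    · exact ⟨_, hp, hfg ▸ lastEdge_append_singleton ..⟩
    rcases le_or_gt x' y with hx'y | hyx'
    · refine ih hp' ?_ hyf hyx
      rcases hx'y.eq_or_lt with rfl | hx'y
      · exact hx'p
      · exact hβ.mem_of_edgeLT hg (lastEdge_mem he hp'.1) hx'g hx'p hgp hyp hx'y
    rcases edgeLT_or_edgeLT_of_ne hfg with hfg | hgf
    · refine ⟨_, isDecreasingWalk_append_singleton.2 ⟨hp, ?_, hyf, hf, ?_, hyx, ?_⟩,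
        lastEdge_append_singleton ..⟩
      · rwa [lastEdge_append_singleton]
      · rwa [lastEdge_append_singleton]
      · simpa using hyx'
    · exact ih hp' hx'p (hβ.mem_of_edgeLT hg hf hyp hyf hgf hx'g hyx') hx'x

theorem exists_isDecreasingWalk_of_isWalk (hβ : IsBetaElim H) (he : e ∈ H) {f : Finset V}
    {p : List (V × Finset V)} (hw : IsWalk H f e p) (hfe : edgeLE f e)
    (hp : ∀ q ∈ p, edgeLE q.2 e ∧ q.1 ≤ x) :
    ∃ q, IsDecreasingWalk H x e q ∧ lastEdge e q = f := by
  induction p generalizing f with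
  | nil =>
    obtain ⟨-, -, rfl⟩ := hw
    exact ⟨[], isDecreasingWalk_nil, rfl⟩
  | cons a p ih =>
    obtain ⟨y, g⟩ := a
    obtain ⟨hf, ⟨hyf, hyg, hg, hw⟩, hlast⟩ := hw
    obtain ⟨hge, hyx⟩ := hp (y, g) List.mem_cons_self
    obtain ⟨q, hq, rfl⟩ := ih ⟨hg, hw, (lastEdge_cons_s5 f g y p) ▸ hlast⟩ hge
      fun r hr => hp r (List.mem_cons_of_mem _ hr)
    exact hq.exists_of_mem_lastEdge hβ he hf hfe hyg hyf hyx

end DecreasingWalk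

theorem exists_decreasing_path {V : Type*} [LinearOrder V] (H : Finset (Finset V))
    (hβ : IsBetaElim H) (e : Finset V) (he : e ∈ H) (x : V) (f : Finset V)
    (hf : memHex H e x f) :
    ∃ p, IsPath H e f p ∧
      List.Chain' (fun a b => edgeLT b a) (e :: p.map Prod.snd) ∧
      List.Chain' (fun a b => b < a) (p.map Prod.fst) ∧
      ∀ q ∈ p, q.1 ≤ x := by
  obtain ⟨p, hw, hfe, hp⟩ := hf
  obtain ⟨q, hq, rfl⟩ := exists_isDecreasingWalk_of_isWalk hβ he hw hfe hp
  exact ⟨q, hq.isPath he, hq.2.1, hq.2.2.1, hq.2.2.2⟩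
end

section
/- Let X = {x_1,...,x_k} and Y = {y_1,...,y_k} be two disjoint sets of k Boolean variables, and let f : {0,1}^{X∪Y} → {0,1} be the function computed by the CNF ∧_{i=1}^k (x_i ∨ y_i). Any family of (X,Y)-rectangles whose union of satisfying sets equals sat(f) has size at least 2^k. -/
/-!
Fooling set argument. For `a : Fin k → Bool` the assignment `x = a, y = ¬a` satisfies the CNF,
so some rectangle of the cover contains it. A rectangle containing the assignments of `a` and `b`
also contains both mixed assignments `x = a, y = ¬b` and `x = b, y = ¬a`; these satisfy the CNF
only if `b ≤ a` and `a ≤ b` pointwise. Hence distinct `a` need distinct rectangles.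
-/

section Rectangle

variable {ι κ γ : Type*}

def mixAssignment (τ τ' : ι ⊕ κ → γ) : ι ⊕ κ → γ :=
  Sum.elim (τ ∘ Sum.inl) (τ' ∘ Sum.inr)

def IsRectangle (r : (ι ⊕ κ → γ) → Bool) : Prop :=
  ∀ τ τ', r τ = true → r τ' = true → r (mixAssignment τ τ') = true

theorem card_le_card_of_isFoolingSet {R : Finset ((ι ⊕ κ → γ) → Bool)}
    {f : (ι ⊕ κ → γ) → Prop} (hrect : ∀ r ∈ R, IsRectangle r)
    (hcover : ∀ τ, f τ ↔ ∃ r ∈ R, r τ = true)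
    {A : Type*} [Fintype A] (σ : A → ι ⊕ κ → γ) (hσ : ∀ a, f (σ a))
    (hfool : ∀ a b, f (mixAssignment (σ a) (σ b)) → f (mixAssignment (σ b) (σ a)) → a = b) :
    Fintype.card A ≤ R.card := by
  choose g hgR hg using fun a => (hcover (σ a)).mp (hσ a)
  have hg_inj : Function.Injective g := by
    intro a b hab
    have hb : g a (σ b) = true := hab ▸ hg b
    exact hfool a b
      ((hcover _).mpr ⟨g a, hgR a, hrect _ (hgR a) _ _ (hg a) hb⟩)
      ((hcover _).mpr ⟨g a, hgR a, hrect _ (hgR a) _ _ hb (hg a)⟩)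
  calc Fintype.card A ≤ Fintype.card R :=
        Fintype.card_le_of_injective (fun a => ⟨g a, hgR a⟩)
          fun a b h => hg_inj (congrArg Subtype.val h)
    _ = R.card := Fintype.card_coe R

end Rectangle

section OrCNF

variable {ι : Type*}

def OrCNF (τ : ι ⊕ ι → Bool) : Prop :=
  ∀ i, τ (Sum.inl i) = true ∨ τ (Sum.inr i) = true

def complementaryAssignment (a : ι → Bool) : ι ⊕ ι → Bool :=
  Sum.elim a fun i => !a i

theorem orCNF_complementaryAssignment (a : ι → Bool) : OrCNF (complementaryAssignment a) := by
  intro i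
  cases ha : a i <;> simp [complementaryAssignment, ha]

theorem orCNF_mixAssignment_complementaryAssignment_iff (a b : ι → Bool) :
    OrCNF (mixAssignment (complementaryAssignment a) (complementaryAssignment b)) ↔ b ≤ a := by
  refine forall_congr' fun i => ?_
  cases ha : a i <;> cases hb : b i <;>
    simp [mixAssignment, complementaryAssignment, ha, hb]

end OrCNF

/-- Covering `⋀_{i=1}^k (x_i ∨ y_i)` by `(X,Y)`-rectangles requires at least `2^k`
rectangles. Variables: `Sum.inl i` is `x_i`, `Sum.inr i` is `y_i`. -/
theorem rectangle_cover_lower_bound (k : ℕ)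
    (R : Finset (((Fin k ⊕ Fin k) → Bool) → Bool))
    (hrect : ∀ r ∈ R, ∀ τ τ' : (Fin k ⊕ Fin k) → Bool,
      r τ = true → r τ' = true →
      r (Sum.elim (τ ∘ Sum.inl) (τ' ∘ Sum.inr)) = true)
    (hcover : ∀ τ : (Fin k ⊕ Fin k) → Bool,
      (∀ i : Fin k, τ (Sum.inl i) = true ∨ τ (Sum.inr i) = true) ↔
        ∃ r ∈ R, r τ = true) :
    2 ^ k ≤ R.card := by
  have h := card_le_card_of_isFoolingSet (f := OrCNF) hrect hcover complementaryAssignment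
    orCNF_complementaryAssignment fun a b hab hba =>
      le_antisymm ((orCNF_mixAssignment_complementaryAssignment_iff b a).mp hba)
        ((orCNF_mixAssignment_complementaryAssignment_iff a b).mp hab)
  simpa using h
end

section
/- A β-acyclic hypergraph with n vertices has at most n(n+1)/2 edges. -/
variable {V : Type*} [LinearOrder V]

/-!
Fix a β-elimination order. The edges whose least vertex is `x` all contain `x`, so the
elimination condition at `x` makes them pairwise comparable under inclusion; being nonempty
subsets of `{y | x ≤ y}`, they have pairwise distinct sizes between `1` and `#{y | x ≤ y}`.
Summing over `x` bounds the number of edges by the number of pairs `x ≤ y` of vertices, which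
is the size `n(n+1)/2` of the symmetric square of the vertex set.
-/

open Finset

namespace Finset

variable {α : Type*}

theorem card_le_card_of_isChain {s : Finset α} {F : Finset (Finset α)}
    (hchain : IsChain (· ⊆ ·) (F : Set (Finset α))) (hsub : ∀ e ∈ F, e ⊆ s)
    (hne : ∀ e ∈ F, e.Nonempty) : #F ≤ #s := by
  have hinj : Set.InjOn card (F : Set (Finset α)) := by
    intro e he f hf hcard
    by_contra hef
    rcases hchain he hf hef with h | h
    exacts [hef (eq_of_subset_of_card_le h hcard.ge), hef (eq_of_subset_of_card_le h hcard.le).symm]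
  calc #F ≤ #(Icc 1 #s) := card_le_card_of_injOn card
          (fun e he => mem_Icc.2 ⟨(hne e he).card_pos, card_le_card (hsub e he)⟩) hinj
    _ = #s := by simp

theorem sum_card_filter_le_eq_card_sym2 [LinearOrder α] (s : Finset α) :
    ∑ x ∈ s, #{y ∈ s | x ≤ y} = #s.sym2 := by
  calc ∑ x ∈ s, #{y ∈ s | x ≤ y} = #{p ∈ s ×ˢ s | p.1 ≤ p.2} := by
        simp only [card_filter, sum_product]
    _ = #s.sym2 := by
        refine card_nbij' (fun p => s(p.1, p.2)) (fun z => (z.inf, z.sup)) ?_ ?_ ?_ ?_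
        · rintro ⟨a, b⟩ h
          simp_all
        · intro z hz
          induction z with | _ a b => ?_
          rcases le_total a b with h | h <;> simp_all
        · rintro ⟨a, b⟩ h
          simp_all
        · intro z _
          exact Sym2.sortEquiv.symm_apply_apply z

end Finset

section BetaElim

variable {H : Finset (Finset V)} {s e f : Finset V} {x : V}

theorem subset_of_min_eq_of_filter_subset (hxe : e.min = ↑x) (hxf : x ∈ f)
    (h : {y ∈ e | x < y} ⊆ f) : e ⊆ f := by
  intro y hy
  rcases (min_le_of_eq hy hxe).eq_or_lt with rfl | hlt
  exacts [hxf, h (mem_filter.2 ⟨hy, hlt⟩)]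

theorem IsBetaElim.isChain_min_eq (hH : IsBetaElim H) (x : V) :
    IsChain (· ⊆ ·) (↑(H.filter fun e => e.min = ↑x) : Set (Finset V)) := by
  intro e he f hf _
  obtain ⟨heH, hxe⟩ := mem_filter.1 he
  obtain ⟨hfH, hxf⟩ := mem_filter.1 hf
  exact (hH x e heH f hfH (mem_of_min hxe) (mem_of_min hxf)).imp
    (subset_of_min_eq_of_filter_subset hxe (mem_of_min hxf))
    (subset_of_min_eq_of_filter_subset hxf (mem_of_min hxe))

theorem IsBetaElim.card_filter_min_eq_le (hH : IsBetaElim H) (hne : ∀ e ∈ H, e.Nonempty)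
    (hsub : ∀ e ∈ H, e ⊆ s) (x : V) : #{e ∈ H | e.min = ↑x} ≤ #{y ∈ s | x ≤ y} := by
  refine card_le_card_of_isChain (hH.isChain_min_eq x) (fun e he => ?_)
    (fun e he => hne e (mem_filter.1 he).1)
  obtain ⟨heH, hxe⟩ := mem_filter.1 he
  exact fun y hy => mem_filter.2 ⟨hsub e heH hy, min_le_of_eq hy hxe⟩

theorem IsBetaElim.card_le (hH : IsBetaElim H) (hne : ∀ e ∈ H, e.Nonempty)
    (hsub : ∀ e ∈ H, e ⊆ s) : #H ≤ #s * (#s + 1) / 2 :=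
  calc #H ≤ #(s.biUnion fun x => {e ∈ H | e.min = ↑x}) :=
        card_le_card fun e he => mem_biUnion.2
          ⟨_, hsub e he (min'_mem e (hne e he)), mem_filter.2 ⟨he, (coe_min' _).symm⟩⟩
    _ ≤ ∑ x ∈ s, #{e ∈ H | e.min = ↑x} := card_biUnion_le
    _ ≤ ∑ x ∈ s, #{y ∈ s | x ≤ y} := sum_le_sum fun x _ => hH.card_filter_min_eq_le hne hsub x
    _ = #s * (#s + 1) / 2 := by
        rw [sum_card_filter_le_eq_card_sym2, card_sym2, Nat.choose_two_right, Nat.add_sub_cancel,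
          mul_comm]

end BetaElim

theorem betaAcyclic_card_bound {V : Type*} [DecidableEq V]
    (H : Finset (Finset V)) (hne : ∀ e ∈ H, e.Nonempty)
    (hacyc : ∃ lo : LinearOrder V, @IsBetaElim V lo H) :
    H.card ≤ (H.biUnion id).card * ((H.biUnion id).card + 1) / 2 := by
  obtain ⟨lo, hH⟩ := hacyc
  exact hH.card_le hne fun e he => subset_biUnion_of_mem id he
end

section
/- Let H be a β-acyclic hypergraph with β-elimination order whose first vertex is x_1, edge order <_H, and let e ∈ H with x_1 ∈ e. Then every edge f ∈ H_e^{x_1} satisfies x_1 ∈ f ⊆ e or f = e. -/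
variable {V : Type*} [LinearOrder V]

/-! A walk leaving `f` must first pass through a vertex of `f` that is `≤ x₁`, hence through `x₁`
itself. The β-elimination condition at the minimum vertex `x₁` then makes `e` and `f` comparable
under inclusion, and `e ⊊ f` is impossible because it would force `e <_H f`. -/

theorem Finset.subset_of_filter_lt_subset {s t : Finset V} {x : V} (hx : x ∈ t)
    (hmin : ∀ y ∈ s, x ≤ y) (h : s.filter (x < ·) ⊆ t) : s ⊆ t := by
  intro y hy
  rcases (hmin y hy).eq_or_lt with rfl | hxy
  · exact hx
  · exact h (Finset.mem_filter.mpr ⟨hy, hxy⟩)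

theorem IsBetaElim.subset_or_subset {H : Finset (Finset V)} (hβ : IsBetaElim H) {x : V}
    {e f : Finset V} (he : e ∈ H) (hf : f ∈ H) (hxe : x ∈ e) (hxf : x ∈ f)
    (hmine : ∀ y ∈ e, x ≤ y) (hminf : ∀ y ∈ f, x ≤ y) : e ⊆ f ∨ f ⊆ e :=
  (hβ x e he f hf hxe hxf).imp (Finset.subset_of_filter_lt_subset hxf hmine)
    (Finset.subset_of_filter_lt_subset hxe hminf)

theorem not_edgeLT_of_subset {e f : Finset V} (h : e ⊆ f) : ¬ edgeLT f e := by
  rintro ⟨hne, hmax⟩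
  rcases Finset.mem_symmDiff.mp (Finset.max'_mem _ hne) with ⟨-, hnot⟩ | ⟨he, hnf⟩
  · exact hnot hmax
  · exact hnf (h he)

theorem edgeLE.eq_of_subset {e f : Finset V} (hle : edgeLE f e) (h : e ⊆ f) : f = e :=
  hle.resolve_right (not_edgeLT_of_subset h)

theorem memHex.mem {H : Finset (Finset V)} {e f : Finset V} {x : V} (hf : memHex H e x f) :
    f ∈ H := by
  obtain ⟨-, ⟨hfH, -⟩, -⟩ := hf
  exact hfH

theorem memHex.edgeLE {H : Finset (Finset V)} {e f : Finset V} {x : V} (hf : memHex H e x f) :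
    edgeLE f e := by
  obtain ⟨-, -, hle, -⟩ := hf
  exact hle

theorem memHex.eq_or_exists_mem_le {H : Finset (Finset V)} {e f : Finset V} {x : V}
    (hf : memHex H e x f) : f = e ∨ ∃ y ∈ f, y ≤ x := by
  obtain ⟨p, ⟨-, hwalk, hlast⟩, -, hp⟩ := hf
  cases p with
  | nil => exact Or.inl hlast
  | cons q p => exact Or.inr ⟨q.1, hwalk.1, (hp q List.mem_cons_self).2⟩

theorem hex_min_vertex {V : Type*} [LinearOrder V] (H : Finset (Finset V))
    (hβ : IsBetaElim H) (x1 : V) (hmin : ∀ y : V, x1 ≤ y)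
    (e : Finset V) (he : e ∈ H) (hx1e : x1 ∈ e) :
    ∀ f, memHex H e x1 f → (x1 ∈ f ∧ f ⊆ e) ∨ f = e := by
  intro f hf
  rcases hf.eq_or_exists_mem_le with hfe | ⟨y, hyf, hyx⟩
  · exact Or.inr hfe
  have hx1f : x1 ∈ f := le_antisymm hyx (hmin y) ▸ hyf
  rcases hβ.subset_or_subset he hf.mem hx1e hx1f (fun y _ => hmin y) (fun y _ => hmin y)
    with hef | hfe
  · exact Or.inr (hf.edgeLE.eq_of_subset hef)
  · exact Or.inl ⟨hx1f, hfe⟩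
end

section
/- Let F be a monotone CNF formula and M an induced matching of size q in the bipartite incidence graph of F between a set V_t of variable/clause vertices and its complement, such that for each matched pair (x_e, c_e) with e ∈ M, x_e is a variable of the clause c_e, and for distinct e, e' ∈ M, the variable x_{e'} does not occur in clause c_e. Let τ be the partial assignment setting every clause-indicator variable c_K with K not matched in M to 1 (in the formula F̂ where a fresh variable c_K is added to each clause K) and setting every original variable not matched in M to 0. Then the restricted function F̂[τ] is logically equivalent to ∧_{e ∈ M} (x_e ∨ c_e). -/
/-! Every unmatched clause of `F̂` is satisfied by `τ` through its indicator, so only the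
matched clauses `c_e ∪ {c_{c_e}}` constrain `F̂[τ]`. In such a clause every unmatched variable
is set to `false`, and no other matched variable `x_{e'}` occurs in `c_e` because `M` is
induced; so the clause reduces to `x_e ∨ c_e`. -/

namespace MonotoneCNF

variable {V : Type*} [DecidableEq V]

/-- The assignment `σ` overridden by the partial assignment `τ`. -/
def restrictOutsideMatching (M : Finset (V × Finset V)) (σ : V ⊕ Finset V → Bool) :
    V ⊕ Finset V → Bool :=
  Sum.elim (fun v => if v ∈ M.image Prod.fst then σ (.inl v) else false)
    (fun K => if K ∈ M.image Prod.snd then σ (.inr K) else true)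

def SatisfiesHatClause (σ : V ⊕ Finset V → Bool) (K : Finset V) : Prop :=
  σ (.inr K) = true ∨ ∃ v ∈ K, σ (.inl v) = true

section restrictOutsideMatching

variable {M : Finset (V × Finset V)} {σ : V ⊕ Finset V → Bool}

theorem restrictOutsideMatching_inl_eq_true {v : V} :
    restrictOutsideMatching M σ (.inl v) = true ↔
      v ∈ M.image Prod.fst ∧ σ (.inl v) = true := by
  by_cases h : v ∈ M.image Prod.fst <;> simp [restrictOutsideMatching, h]

theorem restrictOutsideMatching_inl_fst {p : V × Finset V} (hp : p ∈ M) :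
    restrictOutsideMatching M σ (.inl p.1) = σ (.inl p.1) :=
  if_pos (Finset.mem_image_of_mem _ hp)

theorem restrictOutsideMatching_inr_snd {p : V × Finset V} (hp : p ∈ M) :
    restrictOutsideMatching M σ (.inr p.2) = σ (.inr p.2) :=
  if_pos (Finset.mem_image_of_mem _ hp)

theorem restrictOutsideMatching_inr_of_notMem {K : Finset V} (hK : K ∉ M.image Prod.snd) :
    restrictOutsideMatching M σ (.inr K) = true :=
  if_neg hK

theorem satisfiesHatClause_restrictOutsideMatching_snd_iff
    (hind : ∀ p ∈ M, ∀ q ∈ M, p ≠ q → p.1 ∉ q.2) {p : V × Finset V} (hp : p ∈ M)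
    (hp₁ : p.1 ∈ p.2) :
    SatisfiesHatClause (restrictOutsideMatching M σ) p.2 ↔
      σ (.inl p.1) = true ∨ σ (.inr p.2) = true := by
  unfold SatisfiesHatClause
  rw [restrictOutsideMatching_inr_snd hp, or_comm (a := σ (.inl p.1) = true)]
  refine or_congr_right ⟨fun ⟨v, hv, hσv⟩ => ?_, fun h => ⟨p.1, hp₁, ?_⟩⟩
  · obtain ⟨hvM, hσq⟩ := restrictOutsideMatching_inl_eq_true.mp hσv
    obtain ⟨q, hq, rfl⟩ := Finset.mem_image.mp hvM
    obtain rfl : q = p := by_contra fun hqp => hind q hq p hp hqp hv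
    exact hσq
  · rwa [restrictOutsideMatching_inl_fst hp]

end restrictOutsideMatching

end MonotoneCNF

/-- A monotone CNF `F` is a finite set of clauses, each clause a finite set of
(positive) variables. In `F̂`, each clause `K` gets a fresh indicator variable
`Sum.inr K`; original variables are `Sum.inl v`. Given an induced matching `M`
(a set of pairs `(x_e, c_e)` with `x_e` a variable of clause `c_e`, pairwise
using distinct variables and distinct clauses, and with `x_{e'} ∉ c_e` for
distinct pairs), the partial assignment `τ` sets every unmatched clause
indicator to true and every unmatched original variable to false. Then
`F̂[τ] ≡ ⋀_{e ∈ M} (x_e ∨ c_e)`. -/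
theorem hat_restriction_equiv_matching {V : Type*} [DecidableEq V]
    (F : Finset (Finset V)) (M : Finset (V × Finset V))
    (hM : ∀ p ∈ M, p.2 ∈ F ∧ p.1 ∈ p.2)
    (hind : ∀ p ∈ M, ∀ q ∈ M, p ≠ q → p.1 ≠ q.1 ∧ p.2 ≠ q.2 ∧ p.1 ∉ q.2) :
    ∀ σ : V ⊕ Finset V → Bool,
      let σ' : V ⊕ Finset V → Bool := fun w =>
        match w with
        | .inl v => if v ∈ M.image Prod.fst then σ (.inl v) else false
        | .inr K => if K ∈ M.image Prod.snd then σ (.inr K) else true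
      ((∀ K ∈ F, σ' (.inr K) = true ∨ ∃ v ∈ K, σ' (.inl v) = true) ↔
        ∀ p ∈ M, σ (.inl p.1) = true ∨ σ (.inr p.2) = true) := by
  intro σ
  change (∀ K ∈ F,
    MonotoneCNF.SatisfiesHatClause (MonotoneCNF.restrictOutsideMatching M σ) K) ↔ _
  have hinduced : ∀ p ∈ M, ∀ q ∈ M, p ≠ q → p.1 ∉ q.2 :=
    fun p hp q hq hpq => (hind p hp q hq hpq).2.2
  have hmatched (p) (hp : p ∈ M) :=
    MonotoneCNF.satisfiesHatClause_restrictOutsideMatching_snd_iff (σ := σ) hinduced hp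
      (hM p hp).2
  refine ⟨fun h p hp => (hmatched p hp).mp (h p.2 (hM p hp).1), fun h K _ => ?_⟩
  by_cases hK : K ∈ M.image Prod.snd
  · obtain ⟨p, hp, rfl⟩ := Finset.mem_image.mp hK
    exact (hmatched p hp).mpr (h p hp)
  · exact .inl (MonotoneCNF.restrictOutsideMatching_inr_of_notMem hK)
end

section
/- Let F be a monotone CNF formula whose incidence graph has MIM-width k, and let F̂ be obtained from F by adding a fresh variable to each clause. Then every structured DNNF computing F̂ has size at least 2^{k/2}. -/
/-!
The vtree `T` of `D` is a branch decomposition of the incidence graph, so some node `s` of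
`T` carries an induced matching `M` of size at least `k` across the cut `A = s.leaves`.
Edges inside `A` are not controlled by `M`, so keep only the edges whose variable end lies
in `A`, or only those whose clause end does; one of the two kinds has `m ≥ k / 2`
members `(v_q, K_q)`. They form an induced matching of the whole incidence graph, hence on a
subcube `F̂` becomes `⋀ q, (v_q ∨ c_{K_q})`, with one literal of each clause on either side
of the cut.

The `2 ^ m` inputs of this function that satisfy exactly one literal per clause form a
fooling set. Follow an accepting certificate down from the output, through a satisfied
input at ∨-gates and through the input straddling `A` at ∧-gates (in a circuit respecting
`T` at most one input straddles a cut of `T`), until this is no longer possible. Two inputs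
whose paths end at the same gate can be mixed across the cut and are still accepted, so
distinct members of the fooling set end at distinct gates.
-/

/-- Labels of the gates of an NNF circuit: literals (a variable together with a
polarity), boolean constants, ∧-gates and ∨-gates. -/
inductive GateLabel (V : Type*) where
  | lit (x : V) (b : Bool)
  | const (b : Bool)
  | and
  | or

/-- An NNF circuit: a DAG whose gates are indexed by `Fin size`, wires go from
smaller indices to larger ones, inputs are labeled by literals or constants and
internal gates by ∧ or ∨, with a distinguished output gate. -/
structure NNFCircuit (V : Type*) where
  size : ℕ
  label : Fin size → GateLabel V
  wires : Fin size → List (Fin size)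
  wiresLt : ∀ i : Fin size, ∀ j ∈ wires i, (j : ℕ) < (i : ℕ)
  inputsOk : ∀ i : Fin size,
    (label i = GateLabel.and ∨ label i = GateLabel.or) ∨ wires i = []
  output : Fin size

namespace NNFCircuit

variable {V : Type*}

/-- The boolean value computed at gate `i` under assignment `τ`. -/
def eval (C : NNFCircuit V) (τ : V → Bool) (i : Fin C.size) : Bool :=
  match C.label i with
  | .lit x b => τ x == b
  | .const b => b
  | .and => (C.wires i).attach.all fun j => C.eval τ j.1
  | .or => (C.wires i).attach.any fun j => C.eval τ j.1
termination_by (i : ℕ)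
decreasing_by all_goals exact C.wiresLt i j.1 j.2

/-- The set of variables appearing in the subcircuit rooted at gate `i`. -/
def vars [DecidableEq V] (C : NNFCircuit V) (i : Fin C.size) : Finset V :=
  match C.label i with
  | .lit x _ => {x}
  | .const _ => ∅
  | .and => (C.wires i).attach.foldr (fun j acc => C.vars j.1 ∪ acc) ∅
  | .or => (C.wires i).attach.foldr (fun j acc => C.vars j.1 ∪ acc) ∅
termination_by (i : ℕ)
decreasing_by all_goals exact C.wiresLt i j.1 j.2

/-- A circuit is a DNNF if every ∧-gate is decomposable: the subcircuits rooted at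
its distinct inputs have pairwise disjoint sets of variables. -/
def IsDNNF [DecidableEq V] (C : NNFCircuit V) : Prop :=
  ∀ i : Fin C.size, C.label i = .and →
    ∀ j ∈ C.wires i, ∀ k ∈ C.wires i, j ≠ k → Disjoint (C.vars j) (C.vars k)

/-- Gate `i` is a decision gate: it is a binary ∨-gate of the form
`(x ∧ v₁) ∨ (¬x ∧ v₂)` for some variable `x`. -/
def IsDecisionGate (C : NNFCircuit V) (i : Fin C.size) : Prop :=
  ∃ (x : V) (a b pa va pb vb : Fin C.size),
    C.wires i = [a, b] ∧
    C.label a = .and ∧ C.label b = .and ∧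
    C.wires a = [pa, va] ∧ C.wires b = [pb, vb] ∧
    C.label pa = .lit x true ∧ C.label pb = .lit x false

/-- A decision-DNNF: a DNNF in which every ∨-gate is a decision gate. -/
def IsDecDNNF [DecidableEq V] (C : NNFCircuit V) : Prop :=
  C.IsDNNF ∧ ∀ i : Fin C.size, C.label i = .or → C.IsDecisionGate i

end NNFCircuit

/-- Binary trees with leaves labeled by `α`; used both as vtrees and as branch
decompositions. -/
inductive VTree (α : Type*) where
  | leaf (a : α)
  | node (l r : VTree α)

namespace VTree

variable {α : Type*}

def leavesList : VTree α → List α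
  | .leaf a => [a]
  | .node l r => l.leavesList ++ r.leavesList

def leaves [DecidableEq α] : VTree α → Finset α
  | .leaf a => {a}
  | .node l r => l.leaves ∪ r.leaves

/-- All subtrees (i.e. nodes) of a tree. -/
def subtrees : VTree α → List (VTree α)
  | .leaf a => [.leaf a]
  | .node l r => .node l r :: (l.subtrees ++ r.subtrees)

end VTree

/-- The DNNF `C` respects the vtree `T`: every ∧-gate is binary, and some node
of `T` splits its two inputs' variables. -/
def RespectsVtree {α : Type*} [DecidableEq α] (C : NNFCircuit α) (T : VTree α) : Prop :=
  ∀ i : Fin C.size, C.label i = .and →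
    ∃ l r : VTree α, VTree.node l r ∈ T.subtrees ∧
      ∃ a b : Fin C.size, C.wires i = [a, b] ∧
        C.vars a ⊆ l.leaves ∧ C.vars b ⊆ r.leaves

section IncidenceGraph

variable {V : Type*} [DecidableEq V]

/-- Adjacency in the incidence graph of the monotone CNF `F`: a variable vertex
`Sum.inl v` is adjacent to a clause vertex `Sum.inr K` iff `v` occurs in `K ∈ F`. -/
def IncAdj (F : Finset (Finset V)) (a b : V ⊕ Finset V) : Prop :=
  ∃ v K, K ∈ F ∧ v ∈ K ∧
    ((a = Sum.inl v ∧ b = Sum.inr K) ∨ (a = Sum.inr K ∧ b = Sum.inl v))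

/-- The vertex set of the incidence graph of `F` (equivalently, the variables of
`F̂`): the variables of `F` together with one indicator per clause. -/
def IncVerts (F : Finset (Finset V)) : Finset (V ⊕ Finset V) :=
  (F.biUnion id).image Sum.inl ∪ F.image Sum.inr

/-- `M` is an induced matching of the bipartite graph between `A` and its
complement (inside the incidence graph of `F`). -/
def IsInducedMatching (F : Finset (Finset V)) (A : Finset (V ⊕ Finset V))
    (M : Finset ((V ⊕ Finset V) × (V ⊕ Finset V))) : Prop :=
  (∀ p ∈ M, p.1 ∈ A ∧ p.2 ∈ IncVerts F ∧ p.2 ∉ A ∧ IncAdj F p.1 p.2) ∧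
  ∀ p ∈ M, ∀ q ∈ M, p ≠ q →
    p.1 ≠ q.1 ∧ p.2 ≠ q.2 ∧ ¬ IncAdj F p.1 q.2 ∧ ¬ IncAdj F q.1 p.2

/-- `T` is a branch decomposition of the incidence graph of `F`: its leaves are in
one-to-one correspondence with the vertices. -/
def IsBranchDecomp (F : Finset (Finset V)) (T : VTree (V ⊕ Finset V)) : Prop :=
  T.leavesList.Nodup ∧ T.leaves = IncVerts F

end IncidenceGraph

namespace NNFCircuit

variable {W : Type*} (C : NNFCircuit W)

theorem eval_lit {i : Fin C.size} {x : W} {b : Bool} (h : C.label i = .lit x b)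
    (σ : W → Bool) : C.eval σ i = (σ x == b) := by
  rw [eval]; split <;> simp_all

theorem eval_and {i : Fin C.size} (h : C.label i = .and) (σ : W → Bool) :
    C.eval σ i = true ↔ ∀ j ∈ C.wires i, C.eval σ j = true := by
  rw [eval]; split <;> simp_all

theorem eval_or {i : Fin C.size} (h : C.label i = .or) (σ : W → Bool) :
    C.eval σ i = true ↔ ∃ j ∈ C.wires i, C.eval σ j = true := by
  rw [eval]; split <;> simp_all

variable [DecidableEq W]

theorem vars_lit {i : Fin C.size} {x : W} {b : Bool} (h : C.label i = .lit x b) :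
    C.vars i = {x} := by
  rw [vars]; split <;> simp_all

theorem vars_const {i : Fin C.size} {b : Bool} (h : C.label i = .const b) :
    C.vars i = ∅ := by
  rw [vars]; split <;> simp_all

private theorem mem_foldr_union {ι : Type*} (f : ι → Finset W) (l : List ι) (x : W) :
    x ∈ l.foldr (fun j acc => f j ∪ acc) ∅ ↔ ∃ j ∈ l, x ∈ f j := by
  induction l <;> simp_all

theorem vars_subset_of_mem_wires {i j : Fin C.size} (hj : j ∈ C.wires i) :
    C.vars j ⊆ C.vars i := by
  intro x hx
  rcases C.inputsOk i with hl | hl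
  · rw [vars]
    rcases hl with hl | hl <;>
    · split <;> simp_all only [reduceCtorEq, mem_foldr_union]
      exact ⟨⟨j, hj⟩, List.mem_attach _ _, hx⟩
  · simp [hl] at hj

theorem eval_congr {σ τ : W → Bool} (i : Fin C.size) (h : ∀ x ∈ C.vars i, σ x = τ x) :
    C.eval σ i = C.eval τ i := by
  induction i using WellFoundedLT.induction with
  | ind i ih =>
  have hchild : ∀ j ∈ C.wires i, C.eval σ j = C.eval τ j := fun j hj =>
    ih j (C.wiresLt i j hj) fun x hx => h x (C.vars_subset_of_mem_wires hj hx)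
  cases hl : C.label i with
  | lit x b => rw [C.eval_lit hl, C.eval_lit hl, h x (by simp [C.vars_lit hl])]
  | const b => rw [eval, eval, hl]
  | and =>
    rw [Bool.eq_iff_iff, C.eval_and hl, C.eval_and hl]
    exact forall₂_congr fun j hj => by rw [hchild j hj]
  | or =>
    rw [Bool.eq_iff_iff, C.eval_or hl, C.eval_or hl]
    exact exists_congr fun j => and_congr_right fun hj => by rw [hchild j hj]

end NNFCircuit

namespace VTree

variable {α : Type*}

theorem nodup_of_node {l r : VTree α} (h : (node l r).leavesList.Nodup) :
    l.leavesList.Nodup ∧ r.leavesList.Nodup := by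
  rw [leavesList, List.nodup_append] at h
  exact ⟨h.1, h.2.1⟩

theorem mem_subtrees_trans {t u w : VTree α} (hu : u ∈ t.subtrees) (hw : w ∈ u.subtrees) :
    w ∈ t.subtrees := by
  induction t with
  | leaf a => simp_all [subtrees]
  | node l r ihl ihr =>
    simp only [subtrees, List.mem_cons, List.mem_append] at hu ⊢
    rcases hu with rfl | hu | hu
    · simpa [subtrees] using hw
    · exact Or.inr (Or.inl (ihl hu))
    · exact Or.inr (Or.inr (ihr hu))

theorem self_mem_subtrees (t : VTree α) : t ∈ t.subtrees := by
  cases t <;> simp [subtrees]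

theorem children_mem_subtrees {t l r : VTree α} (h : node l r ∈ t.subtrees) :
    l ∈ t.subtrees ∧ r ∈ t.subtrees :=
  ⟨mem_subtrees_trans h (by simp [subtrees, self_mem_subtrees]),
    mem_subtrees_trans h (by simp [subtrees, self_mem_subtrees])⟩

theorem nodup_of_mem_subtrees {t u : VTree α} (hnd : t.leavesList.Nodup)
    (hu : u ∈ t.subtrees) : u.leavesList.Nodup := by
  induction t with
  | leaf a => simp_all [subtrees]
  | node l r ihl ihr =>
    simp only [subtrees, List.mem_cons, List.mem_append] at hu
    rcases hu with rfl | hu | hu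
    · exact hnd
    · exact ihl (nodup_of_node hnd).1 hu
    · exact ihr (nodup_of_node hnd).2 hu

variable [DecidableEq α]

theorem mem_leaves_iff (t : VTree α) (x : α) : x ∈ t.leaves ↔ x ∈ t.leavesList := by
  induction t <;> simp_all [leaves, leavesList]

theorem disjoint_leaves_of_nodup {l r : VTree α} (h : (node l r).leavesList.Nodup) :
    Disjoint l.leaves r.leaves := by
  rw [leavesList, List.nodup_append] at h
  exact Finset.disjoint_left.2 fun x hl hr =>
    h.2.2 x ((mem_leaves_iff l x).1 hl) x ((mem_leaves_iff r x).1 hr) rfl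

theorem leaves_subset_of_mem_subtrees {t u : VTree α} (hu : u ∈ t.subtrees) :
    u.leaves ⊆ t.leaves := by
  induction t with
  | leaf a => simp_all [subtrees]
  | node l r ihl ihr =>
    simp only [subtrees, List.mem_cons, List.mem_append] at hu
    rcases hu with rfl | hu | hu
    · rfl
    · exact (ihl hu).trans Finset.subset_union_left
    · exact (ihr hu).trans Finset.subset_union_right

theorem leaves_laminar {t s u : VTree α} (hnd : t.leavesList.Nodup)
    (hs : s ∈ t.subtrees) (hu : u ∈ t.subtrees) :
    s.leaves ⊆ u.leaves ∨ u.leaves ⊆ s.leaves ∨ Disjoint s.leaves u.leaves := by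
  induction t generalizing s u with
  | leaf a => simp_all [subtrees]
  | node l r ihl ihr =>
    have hlr : ∀ x ∈ l.subtrees, ∀ y ∈ r.subtrees, Disjoint x.leaves y.leaves :=
      fun x hx y hy => (disjoint_leaves_of_nodup hnd).mono
        (leaves_subset_of_mem_subtrees hx) (leaves_subset_of_mem_subtrees hy)
    have hs' := leaves_subset_of_mem_subtrees hs
    have hu' := leaves_subset_of_mem_subtrees hu
    simp only [subtrees, List.mem_cons, List.mem_append] at hs hu
    rcases hs with rfl | hs | hs
    · exact Or.inr (Or.inl hu')
    rcases hu with rfl | hu | hu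
    · exact Or.inl hs'
    · exact ihl (nodup_of_node hnd).1 hs hu
    · exact Or.inr (Or.inr (hlr s hs u hu))
    rcases hu with rfl | hu | hu
    · exact Or.inl hs'
    · exact Or.inr (Or.inr (hlr u hu s hs).symm)
    · exact ihr (nodup_of_node hnd).2 hs hu

end VTree

namespace NNFCircuit

variable {W : Type*} [DecidableEq W] (C : NNFCircuit W) (A : Finset W)

def Straddles (i : Fin C.size) : Prop :=
  ¬ C.vars i ⊆ A ∧ ¬ Disjoint (C.vars i) A

inductive CutPath (σ : W → Bool) : Fin C.size → Fin C.size → Prop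
  | refl (i : Fin C.size) : CutPath σ i i
  | or {i c g : Fin C.size} : C.label i = .or → c ∈ C.wires i → C.eval σ c = true →
      CutPath σ c g → CutPath σ i g
  | and {i c g : Fin C.size} : C.label i = .and → c ∈ C.wires i → C.Straddles A c →
      CutPath σ c g → CutPath σ i g

def IsCutEnd (g : Fin C.size) : Prop :=
  ¬ C.Straddles A g ∨ (C.label g = .and ∧ ∀ c ∈ C.wires g, ¬ C.Straddles A c)

variable {C A}

theorem Straddles.label_eq {i : Fin C.size} (h : C.Straddles A i) :
    C.label i = .and ∨ C.label i = .or := by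
  cases hl : C.label i with
  | lit x b =>
    rw [Straddles, C.vars_lit hl, Finset.singleton_subset_iff,
      Finset.disjoint_singleton_left] at h
    exact absurd h.2 (by simpa using h.1)
  | const b => simp [Straddles, C.vars_const hl] at h
  | and => exact Or.inl rfl
  | or => exact Or.inr rfl

theorem exists_cutPath {σ : W → Bool} (i : Fin C.size) (hi : C.eval σ i = true) :
    ∃ g, C.CutPath A σ i g ∧ C.IsCutEnd A g ∧ C.eval σ g = true := by
  induction i using WellFoundedLT.induction with
  | ind i ih =>
  by_cases hend : C.IsCutEnd A i
  · exact ⟨i, .refl i, hend, hi⟩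
  simp only [IsCutEnd, not_or, not_not, not_and, not_forall] at hend
  obtain ⟨hstr, hand⟩ := hend
  rcases hstr.label_eq with hl | hl
  · obtain ⟨c, hc, hcs⟩ := hand hl
    obtain ⟨g, hpath, hg⟩ :=
      ih c (C.wiresLt i c hc) ((C.eval_and hl σ).1 hi c hc)
    exact ⟨g, .and hl hc hcs hpath, hg⟩
  · obtain ⟨c, hc, hcσ⟩ := (C.eval_or hl σ).1 hi
    obtain ⟨g, hpath, hg⟩ := ih c (C.wiresLt i c hc) hcσ
    exact ⟨g, .or hl hc hcσ hpath, hg⟩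

theorem eval_piecewise_of_subset {σ τ : W → Bool} {i : Fin C.size} (h : C.vars i ⊆ A) :
    C.eval (A.piecewise σ τ) i = C.eval σ i :=
  C.eval_congr i fun _ hx => Finset.piecewise_eq_of_mem _ _ _ (h hx)

theorem eval_piecewise_of_disjoint {σ τ : W → Bool} {i : Fin C.size}
    (h : Disjoint (C.vars i) A) : C.eval (A.piecewise σ τ) i = C.eval τ i :=
  C.eval_congr i fun _ hx => Finset.piecewise_eq_of_notMem _ _ _ (Finset.disjoint_left.1 h hx)

theorem eval_piecewise_of_not_straddles {σ τ : W → Bool} {i : Fin C.size}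
    (h : ¬ C.Straddles A i) (hσ : C.eval σ i = true) (hτ : C.eval τ i = true) :
    C.eval (A.piecewise σ τ) i = true := by
  rw [Straddles, not_and_or, not_not, not_not] at h
  rcases h with h | h
  · rwa [eval_piecewise_of_subset h]
  · rwa [eval_piecewise_of_disjoint h]

theorem IsCutEnd.eval_piecewise {σ τ : W → Bool} {g : Fin C.size} (hg : C.IsCutEnd A g)
    (hσ : C.eval σ g = true) (hτ : C.eval τ g = true) :
    C.eval (A.piecewise σ τ) g = true := by
  rcases hg with hg | ⟨hl, hg⟩
  · exact eval_piecewise_of_not_straddles hg hσ hτ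
  · rw [C.eval_and hl] at hσ hτ ⊢
    exact fun c hc => eval_piecewise_of_not_straddles (hg c hc) (hσ c hc) (hτ c hc)

variable {T s : VTree W}

theorem disjoint_of_straddles (hnd : T.leavesList.Nodup) (hresp : RespectsVtree C T)
    (hs : s ∈ T.subtrees) {i c d : Fin C.size} (hi : C.label i = .and) (hc : c ∈ C.wires i)
    (hcs : C.Straddles s.leaves c) (hd : d ∈ C.wires i) (hdc : d ≠ c) :
    Disjoint (C.vars d) s.leaves := by
  obtain ⟨l, r, hlr, a, b, hw, ha, hb⟩ := hresp i hi
  obtain ⟨hl, hr⟩ := VTree.children_mem_subtrees hlr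
  have hdisj := VTree.disjoint_leaves_of_nodup (VTree.nodup_of_mem_subtrees hnd hlr)
  have hinside : ∀ u ∈ T.subtrees, C.vars c ⊆ u.leaves → s.leaves ⊆ u.leaves := by
    intro u hu hcu
    rcases VTree.leaves_laminar hnd hs hu with h | h | h
    · exact h
    · exact absurd (hcu.trans h) hcs.1
    · exact absurd (h.symm.mono_left hcu) hcs.2
  rw [hw] at hc hd
  simp only [List.mem_cons, List.not_mem_nil, or_false] at hc hd
  rcases hc with rfl | rfl <;> rcases hd with rfl | rfl <;> try exact absurd rfl hdc
  · exact (hdisj.mono_left (hinside l hl ha)).symm.mono_left hb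
  · exact (hdisj.mono_right (hinside r hr hb)).mono_left ha

theorem eval_piecewise_of_cutPath (hnd : T.leavesList.Nodup) (hresp : RespectsVtree C T)
    (hs : s ∈ T.subtrees) {σ τ : W → Bool} {i g : Fin C.size}
    (hpath : C.CutPath s.leaves τ i g) (hτ : C.eval τ i = true) (hg : C.IsCutEnd s.leaves g)
    (hσ : C.eval σ g = true) : C.eval (s.leaves.piecewise σ τ) i = true := by
  induction hpath with
  | refl i => exact hg.eval_piecewise hσ hτ
  | or hl hc hcτ _ ih => exact (C.eval_or hl _).2 ⟨_, hc, ih hcτ hg hσ⟩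
  | @and i c _ hl hc hcs _ ih =>
    have hτ' := (C.eval_and hl τ).1 hτ
    refine (C.eval_and hl _).2 fun d hd => ?_
    by_cases hdc : d = c
    · exact hdc ▸ ih (hτ' c hc) hg hσ
    · rw [eval_piecewise_of_disjoint (disjoint_of_straddles hnd hresp hs hl hc hcs hd hdc)]
      exact hτ' d hd

theorem card_le_size_of_fooling (hnd : T.leavesList.Nodup) (hresp : RespectsVtree C T)
    (hs : s ∈ T.subtrees) {ι : Type*} [Fintype ι] (σ : ι → W → Bool)
    (hacc : ∀ a, C.eval (σ a) C.output = true)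
    (hfool : ∀ a b, C.eval (s.leaves.piecewise (σ a) (σ b)) C.output = true →
      C.eval (s.leaves.piecewise (σ b) (σ a)) C.output = true → a = b) :
    Fintype.card ι ≤ C.size := by
  choose g hpath hend hg using fun a => exists_cutPath (A := s.leaves) C.output (hacc a)
  have hinj : Function.Injective g := fun a b hab =>
    hfool a b
      (eval_piecewise_of_cutPath hnd hresp hs (hpath b) (hacc b) (hab ▸ hend a) (hab ▸ hg a))
      (eval_piecewise_of_cutPath hnd hresp hs (hpath a) (hacc a) (hab ▸ hend b) (hab ▸ hg b))
  simpa using Fintype.card_le_of_injective g hinj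

theorem two_pow_card_le_size (hnd : T.leavesList.Nodup) (hresp : RespectsVtree C T)
    (hs : s ∈ T.subtrees) {P : Type*} [Fintype P]
    (τ : (P → Bool) → (P → Bool) → W → Bool)
    (hrect : ∀ x y x' y', s.leaves.piecewise (τ x y) (τ x' y') = τ x y')
    (hacc : ∀ x y, C.eval (τ x y) C.output = true ↔ ∀ q, x q = true ∨ y q = true) :
    2 ^ Fintype.card P ≤ C.size := by
  classical
  have := card_le_size_of_fooling hnd hresp hs (fun x => τ x fun q => !x q)
    (fun x => (hacc _ _).2 fun q => by cases x q <;> simp)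
    (fun x y hxy hyx => by
      rw [hrect, hacc] at hxy hyx
      funext q
      have hxy := hxy q; have hyx := hyx q
      revert hxy hyx; cases x q <;> cases y q <;> simp)
  simpa [Fintype.card_fun] using this

end NNFCircuit

section IncidenceGraph

variable {V : Type*} {F : Finset (Finset V)}

theorem incAdj_inl_inr {v : V} {K : Finset V} :
    IncAdj F (.inl v) (.inr K) ↔ K ∈ F ∧ v ∈ K := by
  simp [IncAdj]

theorem incAdj_inr_inl {v : V} {K : Finset V} :
    IncAdj F (.inr K) (.inl v) ↔ K ∈ F ∧ v ∈ K := by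
  simp [IncAdj]

variable (M : Finset ((V ⊕ Finset V) × (V ⊕ Finset V)))

noncomputable def varClausePairs : Finset (V × Finset V) :=
  M.preimage (fun e => (.inl e.1, .inr e.2)) fun _ _ _ _ h => by simpa [Prod.ext_iff] using h

noncomputable def clauseVarPairs : Finset (V × Finset V) :=
  M.preimage (fun e => (.inr e.2, .inl e.1)) fun _ _ _ _ h => by
    simpa [Prod.ext_iff, and_comm] using h

variable {M}

@[simp]
theorem mem_varClausePairs {e : V × Finset V} :
    e ∈ varClausePairs M ↔ (.inl e.1, .inr e.2) ∈ M :=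
  Finset.mem_preimage

@[simp]
theorem mem_clauseVarPairs {e : V × Finset V} :
    e ∈ clauseVarPairs M ↔ (.inr e.2, .inl e.1) ∈ M :=
  Finset.mem_preimage

def SatisfiesHat (F : Finset (Finset V)) (σ : V ⊕ Finset V → Bool) : Prop :=
  ∀ K ∈ F, σ (Sum.inr K) = true ∨ ∃ v ∈ K, σ (Sum.inl v) = true

/-- A set of variable–clause pairs `(v, K)` forming an induced matching of the whole
incidence graph. -/
def IsInducedIncMatching (F : Finset (Finset V)) (P : Finset (V × Finset V)) : Prop :=
  (∀ p ∈ P, p.2 ∈ F) ∧ ∀ p ∈ P, ∀ q ∈ P, p.1 ∈ q.2 ↔ p = q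

variable [DecidableEq V]

/-- On these assignments `F̂` restricts to `⋀ q, (v_q ∨ c_{K_q})`: the matched variables
and indicators take the values `x` and `y`, all other variables are false and all other
indicators true. -/
def pairAssignment (P : Finset (V × Finset V)) (x y : P → Bool) : V ⊕ Finset V → Bool
  | .inl v => decide (∃ q : P, q.1.1 = v ∧ x q = true)
  | .inr K => decide ((∃ q : P, q.1.2 = K ∧ y q = true) ∨ ∀ q : P, q.1.2 ≠ K)

section PairAssignment

variable {P : Finset (V × Finset V)} {x y : P → Bool}

theorem pairAssignment_inl (v : V) :
    pairAssignment P x y (.inl v) = true ↔ ∃ q : P, q.1.1 = v ∧ x q = true := by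
  simp [pairAssignment]

theorem pairAssignment_inr (K : Finset V) :
    pairAssignment P x y (.inr K) = true ↔
      (∃ q : P, q.1.2 = K ∧ y q = true) ∨ ∀ q : P, q.1.2 ≠ K := by
  simp [pairAssignment]

theorem IsInducedIncMatching.satisfiesHat_pairAssignment_iff
    (hP : IsInducedIncMatching F P) :
    SatisfiesHat F (pairAssignment P x y) ↔ ∀ q, x q = true ∨ y q = true := by
  have hunique : ∀ q q' : P, q'.1.1 ∈ q.1.2 → q' = q := fun q q' h =>
    Subtype.ext ((hP.2 _ q'.2 _ q.2).1 h)
  constructor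
  · intro h q
    rcases h q.1.2 (hP.1 _ q.2) with hc | ⟨v, hv, hvx⟩
    · rcases (pairAssignment_inr _).1 hc with ⟨q', hq', hy⟩ | hnone
      · obtain rfl := hunique q q' (hq' ▸ (hP.2 _ q'.2 _ q'.2).2 rfl)
        exact Or.inr hy
      · exact absurd rfl (hnone q)
    · obtain ⟨q', rfl, hx⟩ := (pairAssignment_inl _).1 hvx
      obtain rfl := hunique q q' hv
      exact Or.inl hx
  · intro h K hK
    by_cases hm : ∃ q : P, q.1.2 = K
    · obtain ⟨q, rfl⟩ := hm
      rcases h q with hx | hy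
      · exact Or.inr
          ⟨q.1.1, (hP.2 _ q.2 _ q.2).2 rfl, (pairAssignment_inl _).2 ⟨q, rfl, hx⟩⟩
      · exact Or.inl ((pairAssignment_inr _).2 (Or.inl ⟨q, rfl, hy⟩))
    · exact Or.inl ((pairAssignment_inr _).2 (Or.inr fun q hq => hm ⟨q, hq⟩))

variable {A : Finset (V ⊕ Finset V)}

theorem piecewise_pairAssignment_of_inl_mem (hA : ∀ p ∈ P, .inl p.1 ∈ A ∧ .inr p.2 ∉ A)
    (x y x' y' : P → Bool) :
    A.piecewise (pairAssignment P x y) (pairAssignment P x' y') = pairAssignment P x y' := by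
  funext z
  by_cases hz : z ∈ A
  · rw [Finset.piecewise_eq_of_mem _ _ _ hz]
    rcases z with v | K
    · rfl
    · have : ∀ q : P, q.1.2 ≠ K := fun q h => (hA _ q.2).2 (h ▸ hz)
      simp [pairAssignment, this]
  · rw [Finset.piecewise_eq_of_notMem _ _ _ hz]
    rcases z with v | K
    · have : ∀ q : P, q.1.1 ≠ v := fun q h => hz (h ▸ (hA _ q.2).1)
      simp [pairAssignment, this]
    · rfl

theorem piecewise_pairAssignment_of_inr_mem (hA : ∀ p ∈ P, .inl p.1 ∉ A ∧ .inr p.2 ∈ A)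
    (x y x' y' : P → Bool) :
    A.piecewise (pairAssignment P x y) (pairAssignment P x' y') = pairAssignment P x' y := by
  funext z
  by_cases hz : z ∈ A
  · rw [Finset.piecewise_eq_of_mem _ _ _ hz]
    rcases z with v | K
    · have : ∀ q : P, q.1.1 ≠ v := fun q h => (hA _ q.2).1 (h ▸ hz)
      simp [pairAssignment, this]
    · rfl
  · rw [Finset.piecewise_eq_of_notMem _ _ _ hz]
    rcases z with v | K
    · rfl
    · have : ∀ q : P, q.1.2 ≠ K := fun q h => hz (h ▸ (hA _ q.2).2)
      simp [pairAssignment, this]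

end PairAssignment


theorem two_pow_card_le_size_of_isInducedIncMatching {D : NNFCircuit (V ⊕ Finset V)}
    {T s : VTree (V ⊕ Finset V)} (hnd : T.leavesList.Nodup) (hresp : RespectsVtree D T)
    (hs : s ∈ T.subtrees) (heval : ∀ σ, D.eval σ D.output = true ↔ SatisfiesHat F σ)
    {P : Finset (V × Finset V)} (hP : IsInducedIncMatching F P)
    (hside : (∀ p ∈ P, .inl p.1 ∈ s.leaves ∧ .inr p.2 ∉ s.leaves) ∨
      (∀ p ∈ P, .inl p.1 ∉ s.leaves ∧ .inr p.2 ∈ s.leaves)) :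
    2 ^ P.card ≤ D.size := by
  rw [← Fintype.card_coe]
  rcases hside with hside | hside
  · exact NNFCircuit.two_pow_card_le_size hnd hresp hs (pairAssignment P)
      (piecewise_pairAssignment_of_inl_mem hside)
      fun x y => (heval _).trans hP.satisfiesHat_pairAssignment_iff
  · exact NNFCircuit.two_pow_card_le_size hnd hresp hs (fun x y => pairAssignment P y x)
      (fun x y x' y' => piecewise_pairAssignment_of_inr_mem hside y x y' x')
      fun x y => ((heval _).trans hP.satisfiesHat_pairAssignment_iff).trans
        (forall_congr' fun _ => or_comm)

namespace IsInducedMatching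

variable {M : Finset ((V ⊕ Finset V) × (V ⊕ Finset V))} {A : Finset (V ⊕ Finset V)}

theorem isInducedIncMatching_varClausePairs (hM : IsInducedMatching F A M) :
    IsInducedIncMatching F (varClausePairs M) := by
  have hadj : ∀ p ∈ varClausePairs M, p.2 ∈ F ∧ p.1 ∈ p.2 := fun p hp =>
    incAdj_inl_inr.1 (hM.1 _ (mem_varClausePairs.1 hp)).2.2.2
  refine ⟨fun p hp => (hadj p hp).1, fun p hp q hq =>
    ⟨fun h => ?_, by rintro rfl; exact (hadj p hp).2⟩⟩
  by_contra hpq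
  refine (hM.2 _ (mem_varClausePairs.1 hp) _ (mem_varClausePairs.1 hq) ?_).2.2.1
    (incAdj_inl_inr.2 ⟨(hadj q hq).1, h⟩)
  simpa [Prod.ext_iff] using hpq

theorem isInducedIncMatching_clauseVarPairs (hM : IsInducedMatching F A M) :
    IsInducedIncMatching F (clauseVarPairs M) := by
  have hadj : ∀ p ∈ clauseVarPairs M, p.2 ∈ F ∧ p.1 ∈ p.2 := fun p hp =>
    incAdj_inr_inl.1 (hM.1 _ (mem_clauseVarPairs.1 hp)).2.2.2
  refine ⟨fun p hp => (hadj p hp).1, fun p hp q hq =>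
    ⟨fun h => ?_, by rintro rfl; exact (hadj p hp).2⟩⟩
  by_contra hpq
  refine (hM.2 _ (mem_clauseVarPairs.1 hp) _ (mem_clauseVarPairs.1 hq) ?_).2.2.2
    (incAdj_inr_inl.2 ⟨(hadj q hq).1, h⟩)
  simpa [Prod.ext_iff, and_comm] using hpq

theorem varClausePairs_sides (hM : IsInducedMatching F A M) :
    ∀ p ∈ varClausePairs M, .inl p.1 ∈ A ∧ .inr p.2 ∉ A := fun _ hp =>
  ⟨(hM.1 _ (mem_varClausePairs.1 hp)).1, (hM.1 _ (mem_varClausePairs.1 hp)).2.2.1⟩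

theorem clauseVarPairs_sides (hM : IsInducedMatching F A M) :
    ∀ p ∈ clauseVarPairs M, .inl p.1 ∉ A ∧ .inr p.2 ∈ A := fun _ hp =>
  ⟨(hM.1 _ (mem_clauseVarPairs.1 hp)).2.2.1, (hM.1 _ (mem_clauseVarPairs.1 hp)).1⟩

theorem card_le_card_add_card (hM : IsInducedMatching F A M) :
    M.card ≤ (varClausePairs M).card + (clauseVarPairs M).card := by
  have hsub : M ⊆ (varClausePairs M).image (fun e => (.inl e.1, .inr e.2)) ∪
      (clauseVarPairs M).image (fun e => (.inr e.2, .inl e.1)) := by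
    rintro ⟨a, b⟩ hp
    obtain ⟨v, K, -, -, ⟨rfl, rfl⟩ | ⟨rfl, rfl⟩⟩ := (hM.1 _ hp).2.2.2
    · exact Finset.mem_union_left _ (Finset.mem_image.2 ⟨(v, K), by simpa using hp, rfl⟩)
    · exact Finset.mem_union_right _ (Finset.mem_image.2 ⟨(v, K), by simpa using hp, rfl⟩)
  calc M.card ≤ _ := Finset.card_le_card hsub
    _ ≤ _ := Finset.card_union_le _ _
    _ ≤ _ := add_le_add Finset.card_image_le Finset.card_image_le

end IsInducedMatching

end IncidenceGraph

theorem two_rpow_half_le_of_le_add {k a b n : ℕ} (hk : k ≤ a + b) (ha : 2 ^ a ≤ n)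
    (hb : 2 ^ b ≤ n) : (2 : ℝ) ^ ((k : ℝ) / 2) ≤ n := by
  wlog hab : a ≤ b generalizing a b
  · exact this (by omega) hb ha (by omega)
  calc (2 : ℝ) ^ ((k : ℝ) / 2) ≤ (2 : ℝ) ^ (b : ℝ) := by
        refine Real.rpow_le_rpow_of_exponent_le one_le_two ?_
        rw [div_le_iff₀ two_pos]
        exact_mod_cast (by omega : k ≤ b * 2)
    _ = ((2 ^ b : ℕ) : ℝ) := by norm_cast
    _ ≤ n := by exact_mod_cast hb

theorem structured_dnnf_lower_bound_general {V : Type*} [DecidableEq V]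
    (F : Finset (Finset V)) (k : ℕ)
    -- the incidence graph of `F` has MIM-width `k`:
    (hmim_lb : ∀ T : VTree (V ⊕ Finset V), IsBranchDecomp F T →
      ∃ s ∈ T.subtrees, ∃ M, IsInducedMatching F s.leaves M ∧ k ≤ M.card)
    -- `D` is a DNNF over the variables of `F̂` …
    (D : NNFCircuit (V ⊕ Finset V))
    -- … which is structured …
    (hstruct : ∃ T : VTree (V ⊕ Finset V),
      T.leavesList.Nodup ∧ T.leaves = IncVerts F ∧ RespectsVtree D T)
    -- … and computes `F̂`:
    (heval : ∀ σ : V ⊕ Finset V → Bool,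
      (D.eval σ D.output = true ↔
        ∀ K ∈ F, σ (Sum.inr K) = true ∨ ∃ v ∈ K, σ (Sum.inl v) = true)) :
    (2 : ℝ) ^ ((k : ℝ) / 2) ≤ (D.size : ℝ) := by
  obtain ⟨T, hnd, hleaves, hresp⟩ := hstruct
  obtain ⟨s, hs, M, hM, hkM⟩ := hmim_lb T ⟨hnd, hleaves⟩
  exact two_rpow_half_le_of_le_add (hkM.trans hM.card_le_card_add_card)
    (two_pow_card_le_size_of_isInducedIncMatching hnd hresp hs heval
      hM.isInducedIncMatching_varClausePairs (.inl hM.varClausePairs_sides))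
    (two_pow_card_le_size_of_isInducedIncMatching hnd hresp hs heval
      hM.isInducedIncMatching_clauseVarPairs (.inr hM.clauseVarPairs_sides))

/-- If the incidence graph of a monotone CNF `F` has MIM-width `k`, then every
structured DNNF computing `F̂` (the formula obtained by adding a fresh indicator
variable `Sum.inr K` to each clause `K`) has size at least `2^(k/2)`. -/
theorem structured_dnnf_lower_bound {V : Type*} [DecidableEq V]
    (F : Finset (Finset V)) (k : ℕ)
    -- the incidence graph of `F` has MIM-width `k`:
    (hmim_lb : ∀ T : VTree (V ⊕ Finset V), IsBranchDecomp F T →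
      ∃ s ∈ T.subtrees, ∃ M, IsInducedMatching F s.leaves M ∧ k ≤ M.card)
    (hmim_ub : ∃ T : VTree (V ⊕ Finset V), IsBranchDecomp F T ∧
      ∀ s ∈ T.subtrees, ∀ M, IsInducedMatching F s.leaves M → M.card ≤ k)
    -- `D` is a DNNF over the variables of `F̂` …
    (D : NNFCircuit (V ⊕ Finset V)) (hD : D.IsDNNF)
    (hvars : D.vars D.output ⊆ IncVerts F)
    -- … which is structured …
    (hstruct : ∃ T : VTree (V ⊕ Finset V),
      T.leavesList.Nodup ∧ T.leaves = IncVerts F ∧ RespectsVtree D T)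
    -- … and computes `F̂`:
    (heval : ∀ σ : V ⊕ Finset V → Bool,
      (D.eval σ D.output = true ↔
        ∀ K ∈ F, σ (Sum.inr K) = true ∨ ∃ v ∈ K, σ (Sum.inl v) = true)) :
    (2 : ℝ) ^ ((k : ℝ) / 2) ≤ (D.size : ℝ) :=
  structured_dnnf_lower_bound_general F k hmim_lb D hstruct heval
end
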